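/- arXiv:2502.18611 — 6 statements merged into one kernel-verified Lean document; each statement's English description precedes it below -/
import Mathlib

section
/- Let X ~ Bin(n,p) with 0 < p < 1, and let a be a real number with 0 ≤ a ≤ p. Then P(X ≤ a·n) ≤ (n+1)^2 · 2^{-n·KL(a‖p)}, where KL(a‖p) = a·log₂(a/p) + (1-a)·log₂((1-a)/(1-p)) is the binary KL divergence (with the conventions 0·log 0 = 0). -/
/-- Binary KL divergence in bits: KL(a‖p) (conventions 0·log 0 = 0 hold since Real.log 0 = 0). -/
noncomputable def klB (a p : ℝ) : ℝ :=
  a * Real.logb 2 (a / p) + (1 - a) * Real.logb 2 ((1 - a) / (1 - p))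

/-- P(Bin(n,p) = k). -/
noncomputable def binPMF (n k : ℕ) (p : ℝ) : ℝ :=
  (n.choose k : ℝ) * p ^ k * (1 - p) ^ (n - k)

/-- P(Bin(n,p) ≤ x). -/
noncomputable def binCDF (n : ℕ) (p x : ℝ) : ℝ :=
  ∑ k ∈ Finset.range (n + 1), if (k : ℝ) ≤ x then binPMF n k p else 0

/-- Binary entropy in bits. -/
noncomputable def binH (x : ℝ) : ℝ :=
  -x * Real.logb 2 x - (1 - x) * Real.logb 2 (1 - x)

theorem binomial_tail_upper (n : ℕ) (p a : ℝ) (hp : 0 < p) (hp1 : p < 1)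
    (ha0 : 0 ≤ a) (hap : a ≤ p) :
    binCDF n p (a * n) ≤ ((n : ℝ) + 1) ^ 2 * (2 : ℝ) ^ (-(n : ℝ) * klB a p) := by
  have h1p : (0:ℝ) < 1 - p := by linarith
  have hpmf_nonneg : ∀ k, 0 ≤ binPMF n k p := by
    intro k
    unfold binPMF
    positivity
  have main : binCDF n p (a * n) ≤ (2 : ℝ) ^ (-(n : ℝ) * klB a p) := by
    rcases eq_or_lt_of_le ha0 with h0 | h0
    · -- case a = 0
      have ha : a = 0 := h0.symm
      subst ha
      have hkl : klB 0 p = - Real.logb 2 (1 - p) := by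
        unfold klB
        simp [Real.logb, Real.log_div one_ne_zero (ne_of_gt h1p)]
        ring
      have hcdf : binCDF n p (0 * n) = (1 - p) ^ n := by
        unfold binCDF
        rw [Finset.sum_eq_single 0]
        · simp [binPMF]
        · intro k hk hk0
          have : ¬ ((k:ℝ) ≤ 0 * (n:ℝ)) := by
            push_neg
            have : 0 < k := Nat.pos_of_ne_zero hk0
            simp only [zero_mul]
            exact_mod_cast this
          rw [if_neg this]
        · intro h
          exact absurd (Finset.mem_range.mpr (Nat.succ_pos n)) h
      rw [hcdf, hkl]
      have : (2:ℝ) ^ (-(n:ℝ) * - Real.logb 2 (1 - p)) = (1 - p) ^ n := by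
        rw [show -(n:ℝ) * - Real.logb 2 (1 - p) = Real.logb 2 (1 - p) * (n:ℝ) by ring,
          Real.rpow_mul (by norm_num), Real.rpow_logb (by norm_num) (by norm_num) h1p,
          Real.rpow_natCast]
      rw [this]
    · -- case 0 < a
      have ha1 : a < 1 := lt_of_le_of_lt hap hp1
      have h1a : (0:ℝ) < 1 - a := by linarith
      set r : ℝ := a * (1 - p) / ((1 - a) * p) with hr_def
      have hr0 : 0 < r := by positivity
      have hr1 : r ≤ 1 := by
        rw [div_le_one (by positivity)]
        nlinarith
      clear_value r
      -- Step A: bound each term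
      have stepA : binCDF n p (a * n) ≤
          ∑ k ∈ Finset.range (n + 1), binPMF n k p * r ^ ((k:ℝ) - a * n) := by
        unfold binCDF
        apply Finset.sum_le_sum
        intro k hk
        by_cases hka : (k:ℝ) ≤ a * n
        · simp only [hka, if_true]
          have h1r : 1 ≤ r ^ ((k:ℝ) - a * n) :=
            Real.one_le_rpow_of_pos_of_le_one_of_nonpos hr0 hr1 (by linarith)
          exact le_mul_of_one_le_right (hpmf_nonneg k) h1r
        · simp only [hka, if_false]
          exact mul_nonneg (hpmf_nonneg k) (Real.rpow_nonneg hr0.le _)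
      -- Step B+C: compute the sum
      have stepB : ∑ k ∈ Finset.range (n + 1), binPMF n k p * r ^ ((k:ℝ) - a * n)
          = (p * r + (1 - p)) ^ n * r ^ (-(a * (n:ℝ))) := by
        rw [show (p * r + (1 - p)) ^ n = ∑ k ∈ Finset.range (n + 1),
            (p * r) ^ k * (1 - p) ^ (n - k) * (n.choose k : ℝ) from add_pow _ _ _,
          Finset.sum_mul]
        apply Finset.sum_congr rfl
        intro k hk
        rw [show (k:ℝ) - a * n = (k:ℝ) + (-(a * (n:ℝ))) by ring,
          Real.rpow_add hr0, Real.rpow_natCast]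
        unfold binPMF
        ring
      -- Step D: simplify the base
      have stepD : p * r + (1 - p) = (1 - p) / (1 - a) := by
        rw [hr_def]
        field_simp
        ring
      -- Step E: identify with 2^(-n*KL)
      have hla := Real.logb_div (b := 2) (ne_of_gt h0) (ne_of_gt hp)
      have hlb := Real.logb_div (b := 2) (ne_of_gt h1a) (ne_of_gt h1p)
      have hlc := Real.logb_div (b := 2) (ne_of_gt h1p) (ne_of_gt h1a)
      have hlr : Real.logb 2 r =
          Real.logb 2 a + Real.logb 2 (1 - p) - (Real.logb 2 (1 - a) + Real.logb 2 p) := by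
        rw [hr_def, Real.logb_div (by positivity) (by positivity),
          Real.logb_mul (ne_of_gt h0) (ne_of_gt h1p),
          Real.logb_mul (ne_of_gt h1a) (ne_of_gt hp)]
      have hexp : -(n:ℝ) * klB a p =
          Real.logb 2 ((1 - p) / (1 - a)) * (n:ℝ) + Real.logb 2 r * (-(a * (n:ℝ))) := by
        unfold klB
        rw [hla, hlb, hlc, hlr]
        ring
      have stepE : (2 : ℝ) ^ (-(n : ℝ) * klB a p)
          = ((1 - p) / (1 - a)) ^ n * r ^ (-(a * (n:ℝ))) := by
        rw [hexp, Real.rpow_add (by norm_num : (0:ℝ) < 2),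
          Real.rpow_mul (by norm_num : (0:ℝ) ≤ 2),
          Real.rpow_mul (by norm_num : (0:ℝ) ≤ 2),
          Real.rpow_logb (by norm_num) (by norm_num) (by positivity),
          Real.rpow_logb (by norm_num) (by norm_num) hr0,
          Real.rpow_natCast]
      calc binCDF n p (a * n)
          ≤ ∑ k ∈ Finset.range (n + 1), binPMF n k p * r ^ ((k:ℝ) - a * n) := stepA
        _ = (p * r + (1 - p)) ^ n * r ^ (-(a * (n:ℝ))) := stepB
        _ = ((1 - p) / (1 - a)) ^ n * r ^ (-(a * (n:ℝ))) := by rw [stepD]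
        _ = (2 : ℝ) ^ (-(n : ℝ) * klB a p) := stepE.symm
  calc binCDF n p (a * n) ≤ (2 : ℝ) ^ (-(n : ℝ) * klB a p) := main
    _ = 1 * (2 : ℝ) ^ (-(n : ℝ) * klB a p) := (one_mul _).symm
    _ ≤ ((n : ℝ) + 1) ^ 2 * (2 : ℝ) ^ (-(n : ℝ) * klB a p) := by
        apply mul_le_mul_of_nonneg_right _ (le_of_lt (Real.rpow_pos_of_pos (by norm_num) _))
        nlinarith [Nat.cast_nonneg (α := ℝ) n]
end

section
/- Let 0 < p < 1 and 0 ≤ ã ≤ a ≤ p with a - ã ≤ 1/n (n ≥ 2). Then KL(ã‖p) - KL(a‖p) ≤ (1/n)·max(0, log₂(p/(1-p))) + (2/n)·log₂ n. -/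
/-!
In bits, `KL(ã‖p) - KL(a‖p) = (a - ã) log₂ (p / (1 - p)) + H(a) - H(ã)`, and the linear term is at
most `(1/n) max(0, log₂ (p / (1 - p)))`. With `η(x) = -x log x`, `H = η(x) + η(1 - x)`. Subadditivity
of `η` bounds `η(a) - η(ã)` by `η(δ)`, `δ = a - ã`, while `x ↦ η(x) + x` is increasing on `[0, 1]`
(its derivative is `-log x`); this bounds `η(1 - a) - η(1 - ã)` by `δ`, and `η(δ) + δ` by
`η(1/n) + 1/n = (log n + 1)/n ≤ 2 log n / n` once `n ≥ 3`. For `n = 2` the gap is at most `H(a) ≤ log 2`.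
-/

namespace Real

lemma mul_logb_div (b x : ℝ) {y : ℝ} (hy : y ≠ 0) :
    x * logb b (x / y) = x * logb b x - x * logb b y := by
  rcases eq_or_ne x 0 with rfl | hx
  · simp
  · rw [logb_div hx hy, mul_sub]

lemma negMulLog_add_le {x y : ℝ} (hx : 0 ≤ x) (hy : 0 ≤ y) :
    negMulLog (x + y) ≤ negMulLog x + negMulLog y := by
  have hlog {z : ℝ} (hz : 0 ≤ z) (hzxy : z ≤ x + y) : -(z * log (x + y)) ≤ -(z * log z) := by
    rcases hz.eq_or_lt with rfl | hz
    · simp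
    · exact neg_le_neg (mul_le_mul_of_nonneg_left (log_le_log hz hzxy) hz.le)
  simp only [negMulLog_eq_neg, add_mul]
  linarith [hlog hx (by linarith), hlog hy (by linarith)]

lemma monotoneOn_negMulLog_add_self : MonotoneOn (fun x ↦ negMulLog x + x) (Set.Icc 0 1) := by
  rintro x ⟨hx, -⟩ c ⟨hc, hc1⟩ hxc
  rcases hc.eq_or_lt with rfl | hc
  · rw [le_antisymm hxc hx]
  set t := x / c
  have hxt : x = t * c := (div_mul_cancel₀ x hc.ne').symm
  have ht : t ≤ 1 := (div_le_one hc).2 hxc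
  have hmul := negMulLog_mul t c
  have ht_le := negMulLog_le_one_sub_self (div_nonneg hx hc.le)
  have hc_nonneg := negMulLog_nonneg hc.le hc1
  simp only [← hxt] at hmul ⊢
  nlinarith [mul_le_mul_of_nonneg_right ht hc_nonneg]

lemma binEntropy_sub_le_negMulLog_sub_add_sub {a b : ℝ} (hb : 0 ≤ b) (hba : b ≤ a) (ha : a ≤ 1) :
    binEntropy a - binEntropy b ≤ negMulLog (a - b) + (a - b) := by
  have hsub : negMulLog a ≤ negMulLog b + negMulLog (a - b) := by
    simpa using negMulLog_add_le hb (sub_nonneg.2 hba)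
  have hmono := monotoneOn_negMulLog_add_self (a := 1 - a) (b := 1 - b)
    ⟨by linarith, by linarith⟩ ⟨by linarith, by linarith⟩ (by linarith)
  simp only [binEntropy_eq_negMulLog_add_negMulLog_one_sub] at *
  linarith

lemma binEntropy_sub_le_of_sub_le_inv {n : ℕ} (hn : 2 ≤ n) {a b : ℝ} (hb : 0 ≤ b) (hba : b ≤ a)
    (ha : a ≤ 1) (hab : a - b ≤ 1 / n) :
    binEntropy a - binEntropy b ≤ 2 / n * log n := by
  rcases hn.eq_or_lt with rfl | hn
  · have := binEntropy_nonneg hb (hba.trans ha)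
    have := binEntropy_le_log_two (p := a)
    norm_num
    linarith
  have hn0 : (0 : ℝ) < n := by positivity
  have hlog : 1 ≤ log n := by
    rw [le_log_iff_exp_le hn0]
    exact exp_one_lt_three.le.trans (by exact_mod_cast hn)
  have hinv : negMulLog (1 / n) = log n / n := by
    simp [negMulLog, log_inv, div_eq_inv_mul]
  have hinv_le : 1 / (n : ℝ) ≤ 1 :=
    (div_le_one hn0).2 (by exact_mod_cast hn.le.trans' (by norm_num))
  have hmono := monotoneOn_negMulLog_add_self ⟨sub_nonneg.2 hba, hab.trans hinv_le⟩
    ⟨by positivity, hinv_le⟩ hab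
  calc binEntropy a - binEntropy b ≤ negMulLog (a - b) + (a - b) :=
        binEntropy_sub_le_negMulLog_sub_add_sub hb hba ha
    _ ≤ log n / n + 1 / n := by simpa only [hinv] using hmono
    _ ≤ 2 / n * log n := by
        rw [← add_div, div_mul_eq_mul_div]
        gcongr
        linarith

end Real

open Real

lemma binH_eq_binEntropy_div_log_two (x : ℝ) : binH x = binEntropy x / log 2 := by
  simp only [binH, binEntropy_eq_negMulLog_add_negMulLog_one_sub, negMulLog, logb]
  ring

lemma klB_sub_klB {p : ℝ} (hp0 : p ≠ 0) (hp1 : p ≠ 1) (x y : ℝ) :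
    klB x p - klB y p = binH y - binH x + (y - x) * logb 2 (p / (1 - p)) := by
  have hq : 1 - p ≠ 0 := sub_ne_zero.2 hp1.symm
  simp only [klB, binH, mul_logb_div 2 _ hp0, mul_logb_div 2 _ hq, logb_div hp0 hq]
  ring

lemma binH_sub_le_of_sub_le_inv {n : ℕ} (hn : 2 ≤ n) {a b : ℝ} (hb : 0 ≤ b) (hba : b ≤ a)
    (ha : a ≤ 1) (hab : a - b ≤ 1 / n) :
    binH a - binH b ≤ 2 / n * logb 2 n := by
  rw [binH_eq_binEntropy_div_log_two, binH_eq_binEntropy_div_log_two, ← sub_div, logb,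
    ← mul_div_assoc]
  exact div_le_div_of_nonneg_right (binEntropy_sub_le_of_sub_le_inv hn hb hba ha hab)
    (log_pos one_lt_two).le

theorem kl_rounding (n : ℕ) (p a ta : ℝ) (hn : 2 ≤ n) (hp : 0 < p) (hp1 : p < 1)
    (h0 : 0 ≤ ta) (h1 : ta ≤ a) (h2 : a ≤ p) (h3 : a - ta ≤ 1 / n) :
    klB ta p - klB a p
      ≤ (1 / n) * max 0 (Real.logb 2 (p / (1 - p))) + (2 / n) * Real.logb 2 n := by
  rw [klB_sub_klB hp.ne' hp1.ne]
  have hentropy : binH a - binH ta ≤ 2 / n * logb 2 n :=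
    binH_sub_le_of_sub_le_inv hn h0 h1 (h2.trans hp1.le) h3
  have hlinear : (a - ta) * logb 2 (p / (1 - p)) ≤ 1 / n * max 0 (logb 2 (p / (1 - p))) :=
    calc (a - ta) * logb 2 (p / (1 - p)) ≤ (a - ta) * max 0 (logb 2 (p / (1 - p))) :=
          mul_le_mul_of_nonneg_left (le_max_right _ _) (sub_nonneg.2 h1)
      _ ≤ 1 / n * max 0 (logb 2 (p / (1 - p))) :=
          mul_le_mul_of_nonneg_right h3 (le_max_left _ _)
  linarith
end

section
/- Let X ~ Bin(n,p) with 0 < p < 1 and 0 ≤ a ≤ p, n ≥ 1. Then log₂ P(X ≤ a·n) ≥ -n·KL(a‖p) - 4·log₂(n+1) - max(0, log₂(p/(1-p))). -/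
private lemma step_up (n k j : ℕ) (hk : k ≤ n) (hj : j < k) :
    n.choose j * k^j * (n-k)^(n-j) ≤ n.choose (j+1) * k^(j+1) * (n-k)^(n-(j+1)) := by
  have hjn : j < n := lt_of_lt_of_le hj hk
  have h1 : n - j = (n - (j+1)) + 1 := by omega
  have core : n.choose j * (n-k) ≤ n.choose (j+1) * k := by
    have h2 : n.choose (j+1) * (j+1) = n.choose j * (n - j) := Nat.choose_succ_right_eq n j
    have h3 : (n-k) * (j+1) ≤ (n-j) * k := Nat.mul_le_mul (by omega) hj
    have h4 : n.choose j * (n-k) * (j+1) ≤ n.choose (j+1) * k * (j+1) := by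
      calc n.choose j * (n-k) * (j+1) = n.choose j * ((n-k)*(j+1)) := by ring
        _ ≤ n.choose j * ((n-j)*k) := Nat.mul_le_mul_left _ h3
        _ = n.choose (j+1) * (j+1) * k := by rw [h2]; ring
        _ = n.choose (j+1) * k * (j+1) := by ring
    exact Nat.le_of_mul_le_mul_right h4 (Nat.succ_pos j)
  calc n.choose j * k^j * (n-k)^(n-j)
      = (n.choose j * (n-k)) * (k^j * (n-k)^(n-(j+1))) := by rw [h1]; ring
    _ ≤ (n.choose (j+1) * k) * (k^j * (n-k)^(n-(j+1))) := Nat.mul_le_mul_right _ core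
    _ = n.choose (j+1) * k^(j+1) * (n-k)^(n-(j+1)) := by ring

private lemma step_down (n k j : ℕ) (hk : k ≤ j) :
    n.choose (j+1) * k^(j+1) * (n-k)^(n-(j+1)) ≤ n.choose j * k^j * (n-k)^(n-j) := by
  rcases le_or_gt n j with h | hjn
  · have hz : n.choose (j+1) = 0 := Nat.choose_eq_zero_of_lt (by omega)
    simp [hz]
  · have h1 : n - j = (n - (j+1)) + 1 := by omega
    have core : n.choose (j+1) * k ≤ n.choose j * (n-k) := by
      have h2 : n.choose (j+1) * (j+1) = n.choose j * (n - j) := Nat.choose_succ_right_eq n j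
      have h3 : (n-j) * k ≤ (n-k) * (j+1) := Nat.mul_le_mul (by omega) (by omega)
      have h4 : n.choose (j+1) * k * (j+1) ≤ n.choose j * (n-k) * (j+1) := by
        calc n.choose (j+1) * k * (j+1) = n.choose (j+1) * (j+1) * k := by ring
          _ = n.choose j * ((n-j) * k) := by rw [h2]; ring
          _ ≤ n.choose j * ((n-k) * (j+1)) := Nat.mul_le_mul_left _ h3
          _ = n.choose j * (n-k) * (j+1) := by ring
      exact Nat.le_of_mul_le_mul_right h4 (Nat.succ_pos j)
    calc n.choose (j+1) * k^(j+1) * (n-k)^(n-(j+1))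
        = (n.choose (j+1) * k) * (k^j * (n-k)^(n-(j+1))) := by ring
      _ ≤ (n.choose j * (n-k)) * (k^j * (n-k)^(n-(j+1))) := Nat.mul_le_mul_right _ core
      _ = n.choose j * k^j * (n-k)^(n-j) := by rw [h1]; ring

private lemma max_term (n k : ℕ) (hk : k ≤ n) (j : ℕ) :
    n.choose j * k^j * (n-k)^(n-j) ≤ n.choose k * k^k * (n-k)^(n-k) := by
  have up : ∀ d j, j + d = k → n.choose j * k^j * (n-k)^(n-j) ≤ n.choose k * k^k * (n-k)^(n-k) := by
    intro d
    induction d with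
    | zero =>
      intro j h
      have hjk : j = k := by omega
      subst hjk; exact le_rfl
    | succ d ih => intro j h; exact le_trans (step_up n k j hk (by omega)) (ih (j+1) (by omega))
  have down : ∀ d j, j = k + d → n.choose j * k^j * (n-k)^(n-j) ≤ n.choose k * k^k * (n-k)^(n-k) := by
    intro d
    induction d with
    | zero =>
      intro j h
      have hjk : j = k := by omega
      subst hjk; exact le_rfl
    | succ d ih =>
      intro j h
      subst h
      exact le_trans (step_down n k (k+d) (by omega)) (ih (k+d) rfl)
  rcases le_or_gt j k with h | h
  · exact up (k - j) j (by omega)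
  · exact down (j - k) j (by omega)

private lemma choose_lower (n k : ℕ) (hk : k ≤ n) :
    n^n ≤ (n+1) * (n.choose k * k^k * (n-k)^(n-k)) := by
  have hsum : ∑ j ∈ Finset.range (n+1), k^j * (n-k)^(n-j) * n.choose j = n^n := by
    have h := add_pow k (n-k) n
    rw [show k + (n-k) = n by omega] at h
    simpa using h.symm
  calc n^n = ∑ j ∈ Finset.range (n+1), k^j * (n-k)^(n-j) * n.choose j := hsum.symm
    _ ≤ ∑ _j ∈ Finset.range (n+1), n.choose k * k^k * (n-k)^(n-k) :=
        Finset.sum_le_sum (fun j _ => by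
          calc k^j * (n-k)^(n-j) * n.choose j = n.choose j * k^j * (n-k)^(n-j) := by ring
            _ ≤ _ := max_term n k hk j)
    _ = (n+1) * (n.choose k * k^k * (n-k)^(n-k)) := by
        rw [Finset.sum_const, Finset.card_range, smul_eq_mul]

private lemma analytic_bound (N a b p : ℝ) (hN : 1 ≤ N) (hb0 : 0 ≤ b) (hba : b ≤ a)
    (hap : a ≤ p) (hp0 : 0 < p) (hp1 : p < 1) (hd : N * (a - b) ≤ 1) :
    N*(b*Real.log b) - N*(a*Real.log a) + N*((1-b)*Real.log (1-b)) - N*((1-a)*Real.log (1-a))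
      + N*(a-b)*(Real.log p - Real.log (1-p))
      ≤ 3*Real.log (N+1) + max 0 (Real.log p - Real.log (1-p)) := by
  have hN0 : (0:ℝ) < N := lt_of_lt_of_le one_pos hN
  have ha1 : a < 1 := lt_of_le_of_lt hap hp1
  have h1a : (0:ℝ) < 1 - a := by linarith
  have h1b : (0:ℝ) < 1 - b := by linarith
  have hd0 : (0:ℝ) ≤ a - b := by linarith
  have hlN1 : Real.log 2 ≤ Real.log (N+1) := Real.log_le_log two_pos (by linarith)
  have hl2 : (0.6931471803:ℝ) < Real.log 2 := Real.log_two_gt_d9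
  have H1 : b*Real.log b + (a-b)*Real.log (a-b) ≤ a*Real.log a := by
    have e1 : b*Real.log b ≤ b*Real.log a := by
      rcases eq_or_lt_of_le hb0 with h|h
      · rw [← h]; simp
      · exact mul_le_mul_of_nonneg_left (Real.log_le_log h hba) hb0
    have e2 : (a-b)*Real.log (a-b) ≤ (a-b)*Real.log a := by
      rcases eq_or_lt_of_le hd0 with h|h
      · rw [← h]; simp
      · exact mul_le_mul_of_nonneg_left (Real.log_le_log h (by linarith)) hd0
    linarith
  have H2 : (1-b)*Real.log (1-b) - (1-a)*Real.log (1-a) ≤ a - b := by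
    have e1 : (1-b)*Real.log (1-b) ≤ (1-a)*Real.log (1-b) :=
      mul_le_mul_of_nonpos_right (by linarith) (Real.log_nonpos (by linarith) (by linarith))
    have e2 : Real.log (1-b) - Real.log (1-a) ≤ (1-b)/(1-a) - 1 := by
      have h := Real.log_le_sub_one_of_pos (show (0:ℝ) < (1-b)/(1-a) by positivity)
      rwa [Real.log_div h1b.ne' h1a.ne'] at h
    have e3 : (1-a) * ((1-b)/(1-a)) = 1 - b := by field_simp
    nlinarith [mul_le_mul_of_nonneg_left e2 h1a.le, e1, e3]
  have H3 : N*(a-b)*(Real.log p - Real.log (1-p)) ≤ max 0 (Real.log p - Real.log (1-p)) := by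
    have hc0 : 0 ≤ N*(a-b) := mul_nonneg hN0.le hd0
    rcases le_total (Real.log p - Real.log (1-p)) 0 with h|h
    · nlinarith [le_max_left (0:ℝ) (Real.log p - Real.log (1-p))]
    · have h1 : N*(a-b)*(Real.log p - Real.log (1-p)) ≤ 1*(Real.log p - Real.log (1-p)) :=
        mul_le_mul_of_nonneg_right hd h
      have h2 := le_max_right (0:ℝ) (Real.log p - Real.log (1-p))
      linarith
  have H4 : -(N*(a-b)*Real.log (a-b)) + N*(a-b) ≤ 3*Real.log (N+1) := by
    rcases eq_or_lt_of_le hd0 with h|h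
    · rw [← h]; simp [Real.log_zero]; linarith
    · have hc0 : 0 < N*(a-b) := mul_pos hN0 h
      have hc1 : N*(a-b) ≤ 1 := hd
      have e1 : Real.log (a-b) = Real.log (N*(a-b)) - Real.log N := by
        rw [Real.log_mul hN0.ne' h.ne']; ring
      have e2 : -((N*(a-b))*Real.log (N*(a-b))) ≤ 1 - N*(a-b) := by
        have h2 := Real.log_le_sub_one_of_pos (show (0:ℝ) < (N*(a-b))⁻¹ by positivity)
        rw [Real.log_inv] at h2
        have h3 := mul_le_mul_of_nonneg_left h2 hc0.le
        have h4 : (N*(a-b)) * (N*(a-b))⁻¹ = 1 := mul_inv_cancel₀ hc0.ne'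
        nlinarith [h3, h4]
      have e3 : 0 ≤ Real.log N := Real.log_nonneg hN
      have e4 : Real.log N ≤ Real.log (N+1) := Real.log_le_log hN0 (by linarith)
      have e5 : (N*(a-b))*Real.log N ≤ Real.log N := by nlinarith [e3, hc1, hc0.le]
      have e6 : N*(a-b)*Real.log (a-b)
          = (N*(a-b))*Real.log (N*(a-b)) - (N*(a-b))*Real.log N := by rw [e1]; ring
      linarith
  have nH1 := mul_le_mul_of_nonneg_left H1 hN0.le
  have nH2 := mul_le_mul_of_nonneg_left H2 hN0.le
  linarith [nH1, nH2, H3, H4]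

theorem binomial_tail_log_lower (n : ℕ) (p a : ℝ) (hn : 1 ≤ n) (hp : 0 < p) (hp1 : p < 1)
    (ha0 : 0 ≤ a) (hap : a ≤ p) :
    -(n : ℝ) * klB a p - 4 * Real.logb 2 ((n : ℝ) + 1)
        - max 0 (Real.logb 2 (p / (1 - p)))
      ≤ Real.logb 2 (binCDF n p (a * n)) := by
  have hn0 : (0:ℝ) < (n:ℝ) := by exact_mod_cast Nat.pos_of_ne_zero (by omega)
  have hnR : (1:ℝ) ≤ (n:ℝ) := by exact_mod_cast hn
  have ha1 : a < 1 := lt_of_le_of_lt hap hp1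
  have h1p : (0:ℝ) < 1 - p := by linarith
  have h1a : (0:ℝ) < 1 - a := by linarith
  set k : ℕ := ⌊a * n⌋₊ with hk_def
  have han : 0 ≤ a * n := by positivity
  have hkle : (k:ℝ) ≤ a * n := Nat.floor_le han
  have hklt : a * n < k + 1 := Nat.lt_floor_add_one _
  have hkn : k < n := by
    have h : (k:ℝ) < (n:ℝ) := lt_of_le_of_lt hkle (by nlinarith)
    exact_mod_cast h
  set m : ℕ := n - k with hm_def
  have hm1 : 1 ≤ m := by omega
  have hM : (m:ℝ) = (n:ℝ) - (k:ℝ) := by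
    rw [hm_def]; exact_mod_cast Nat.cast_sub hkn.le
  set b : ℝ := (k:ℝ)/(n:ℝ) with hb_def
  have hKb : (k:ℝ) = (n:ℝ) * b := by rw [hb_def]; field_simp
  have hb0 : 0 ≤ b := by positivity
  have hba : b ≤ a := by rw [hb_def, div_le_iff₀ hn0]; linarith
  have hd : (n:ℝ) * (a - b) ≤ 1 := by nlinarith [hKb, hklt]
  have hC_pos : 0 < ((n.choose k : ℕ) : ℝ) := by exact_mod_cast Nat.choose_pos hkn.le
  have hpmf_pos : 0 < binPMF n k p := by
    unfold binPMF
    exact mul_pos (mul_pos hC_pos (pow_pos hp k)) (pow_pos h1p _)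
  have hsingle : binPMF n k p ≤ binCDF n p (a*n) := by
    unfold binCDF
    have hmem : k ∈ Finset.range (n+1) := Finset.mem_range.2 (by omega)
    have h := Finset.single_le_sum (f := fun (j : ℕ) => if (j:ℝ) ≤ a*n then binPMF n j p else 0)
      (fun i _ => by
        split
        · unfold binPMF
          exact mul_nonneg (mul_nonneg (Nat.cast_nonneg _) (pow_nonneg hp.le _))
            (pow_nonneg h1p.le _)
        · exact le_rfl) hmem
    rw [if_pos hkle] at h
    exact h
  have hcdf_pos : 0 < binCDF n p (a*n) := lt_of_lt_of_le hpmf_pos hsingle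
  have hlog_mono : Real.log (binPMF n k p) ≤ Real.log (binCDF n p (a*n)) :=
    Real.log_le_log hpmf_pos hsingle
  have hpmf_log : Real.log (binPMF n k p)
      = Real.log ((n.choose k : ℕ) : ℝ) + (k:ℝ)*Real.log p + (m:ℝ)*Real.log (1-p) := by
    unfold binPMF
    rw [Real.log_mul (mul_pos hC_pos (pow_pos hp k)).ne' (pow_pos h1p _).ne',
      Real.log_mul hC_pos.ne' (pow_pos hp k).ne', Real.log_pow, Real.log_pow]
  have hkkpos : (0:ℝ) < (k:ℝ)^k := by
    rcases Nat.eq_zero_or_pos k with h|h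
    · simp [h]
    · have : (0:ℝ) < (k:ℝ) := by exact_mod_cast h
      positivity
  have hmpos : (0:ℝ) < (m:ℝ) := by exact_mod_cast hm1
  have hcast : ((n:ℝ))^n ≤ ((n:ℝ)+1) * (((n.choose k : ℕ):ℝ) * (k:ℝ)^k * (m:ℝ)^m) := by
    exact_mod_cast choose_lower n k hkn.le
  have hlogC : (n:ℝ)*Real.log n ≤ Real.log ((n:ℝ)+1) + Real.log ((n.choose k : ℕ):ℝ)
      + (k:ℝ)*Real.log k + (m:ℝ)*Real.log m := by
    have h0 : (0:ℝ) < (n:ℝ)^n := pow_pos hn0 n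
    have h := Real.log_le_log h0 hcast
    rw [Real.log_pow, Real.log_mul (by positivity)
        (by positivity : (((n.choose k : ℕ):ℝ) * (k:ℝ)^k * (m:ℝ)^m) ≠ 0),
      Real.log_mul (by positivity : (((n.choose k : ℕ):ℝ) * (k:ℝ)^k) ≠ 0) (by positivity),
      Real.log_mul hC_pos.ne' hkkpos.ne', Real.log_pow, Real.log_pow] at h
    linarith
  have F := analytic_bound (n:ℝ) a b p hnR hb0 hba hap hp hp1 hd
  have idA : a * Real.log (a/p) = a*Real.log a - a*Real.log p := by
    rcases eq_or_lt_of_le ha0 with h|h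
    · rw [← h]; ring
    · rw [Real.log_div h.ne' hp.ne']; ring
  have idB : (1-a) * Real.log ((1-a)/(1-p))
      = (1-a)*Real.log (1-a) - (1-a)*Real.log (1-p) := by
    rw [Real.log_div h1a.ne' h1p.ne']; ring
  have idC : (k:ℝ) * Real.log k = (k:ℝ)*Real.log n + (n:ℝ)*(b*Real.log b) := by
    rcases Nat.eq_zero_or_pos k with h|h
    · simp [h] at hKb ⊢
      simp [hb_def, h]
    · have hk0 : (0:ℝ) < (k:ℝ) := by exact_mod_cast h
      have hl : Real.log (k:ℝ) = Real.log (n:ℝ) + Real.log b := by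
        rw [hb_def, Real.log_div hk0.ne' hn0.ne']; ring
      rw [hl, hKb]; ring
  have hMb : (m:ℝ) = (n:ℝ)*(1-b) := by rw [hM, hKb]; ring
  have idD : (m:ℝ) * Real.log m = (m:ℝ)*Real.log n + (n:ℝ)*((1-b)*Real.log (1-b)) := by
    have h1b : (1:ℝ) - b = (m:ℝ)/(n:ℝ) := by rw [hMb]; field_simp
    have hl : Real.log (m:ℝ) = Real.log (n:ℝ) + Real.log (1-b) := by
      rw [h1b, Real.log_div hmpos.ne' hn0.ne']; ring
    rw [hl, hMb]; ring
  have idE : (k:ℝ)*Real.log n + (m:ℝ)*Real.log n = (n:ℝ)*Real.log n := by rw [hM]; ring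
  have idG : (k:ℝ)*Real.log p = (n:ℝ)*b*Real.log p := by rw [hKb]
  have idH : (k:ℝ)*Real.log (1-p) = (n:ℝ)*b*Real.log (1-p) := by rw [hKb]
  have idI : (m:ℝ)*Real.log (1-p) = (n:ℝ)*Real.log (1-p) - (k:ℝ)*Real.log (1-p) := by
    rw [hM]; ring
  have idJ : max 0 (Real.log (p/(1-p))) = max 0 (Real.log p - Real.log (1-p)) := by
    rw [Real.log_div hp.ne' h1p.ne']
  have idA' : (n:ℝ)*(a * Real.log (a/p)) = (n:ℝ)*(a*Real.log a) - (n:ℝ)*(a*Real.log p) := by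
    rw [idA]; ring
  have idB' : (n:ℝ)*((1-a) * Real.log ((1-a)/(1-p)))
      = (n:ℝ)*((1-a)*Real.log (1-a)) - (n:ℝ)*((1-a)*Real.log (1-p)) := by
    rw [idB]; ring
  have main : -(n:ℝ) * (a*Real.log (a/p) + (1-a)*Real.log ((1-a)/(1-p)))
      - 4*Real.log ((n:ℝ)+1) - max 0 (Real.log (p/(1-p)))
      ≤ Real.log (binCDF n p (a*n)) := by
    linarith [hlog_mono, hpmf_log, hlogC, F, idA', idB', idC, idD, idE, idG, idH, idI, idJ]
  unfold klB
  simp only [Real.logb]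
  have hl2 : (0:ℝ) < Real.log 2 := Real.log_pos one_lt_two
  have hmax : max 0 (Real.log (p/(1-p)) / Real.log 2)
      = max 0 (Real.log (p/(1-p))) / Real.log 2 := by
    rw [← max_div_div_right hl2.le, zero_div]
  rw [hmax]
  have h2 := (div_le_div_iff_of_pos_right hl2).mpr main
  exact le_trans (le_of_eq (by ring)) h2
end

section
/- Let X₁,…,X_r be i.i.d. Bin(n,p) with 0 < p < 1, Z = min_i X_i, and 0 ≤ b ≤ p. Then P(Z > b·n) ≤ exp(-r · 2^{-n·KL(b‖p) - 4·log₂(n+1) - max(0, log₂(p/(1-p)))}). -/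
open MeasureTheory ProbabilityTheory

/-!
Write `k = ⌊b n⌋₊`. Since `k ≤ b n`, the event `min_i X_i > b n` forces `X_i ≠ k` for
every `i`, so by independence its probability is at most
`(1 - P(X₁ = k))^r ≤ exp (-r P(X₁ = k))`, and it remains to bound
`P(X₁ = k) = C(n, k) p^k (1 - p)^(n - k)` from below.

Since `k` is a mode of `Bin(n, k/n)`, the `n + 1` point masses of that law sum to one and
`C(n, k) ≥ exp (n H(k/n)) / (n + 1)`, `H` the binary entropy. Writing
`n KL(b‖p) = -n H(b) - n b log p - n (1 - b) log (1 - p)`, what is lost is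
`n (H(b) - H(k/n)) ≤ n H(b - k/n) ≤ log n + 1` (concavity of `H`, `H(0) = 0` and
`b - k/n < 1/n`) and `(b n - k) log (p / (1 - p)) ≤ max 0 (log (p / (1 - p)))`.
-/

open Real

section Binomial

variable {n k j : ℕ} {a : ℝ}

lemma binPMF_nonneg (ha₀ : 0 ≤ a) (ha₁ : a ≤ 1) : 0 ≤ binPMF n k a := by
  unfold binPMF
  have : 0 ≤ 1 - a := by linarith
  positivity

lemma binPMF_pos (ha₀ : 0 < a) (ha₁ : a < 1) (hk : k ≤ n) : 0 < binPMF n k a := by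
  unfold binPMF
  have : 0 < 1 - a := by linarith
  have : 0 < (n.choose k : ℝ) := by exact_mod_cast Nat.choose_pos hk
  positivity

lemma sum_binPMF (n : ℕ) (a : ℝ) : ∑ j ∈ Finset.range (n + 1), binPMF n j a = 1 := by
  have h := add_pow a (1 - a) n
  rw [add_sub_cancel, one_pow] at h
  rw [h]
  exact Finset.sum_congr rfl fun j _ => by unfold binPMF; ring

-- With truncated subtraction both sides vanish for `j ≥ n`.
lemma binPMF_succ_mul (n j : ℕ) (a : ℝ) :
    binPMF n (j + 1) a * ((j + 1) * (1 - a)) = binPMF n j a * ((n - j : ℕ) * a) := by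
  have hchoose : (n.choose (j + 1) : ℝ) * (j + 1) = n.choose j * (n - j : ℕ) := by
    exact_mod_cast Nat.choose_succ_right_eq n j
  rcases lt_or_ge j n with hj | hj
  · have e : n - j = n - (j + 1) + 1 := by omega
    unfold binPMF
    rw [e] at hchoose ⊢
    linear_combination (a ^ (j + 1) * (1 - a) ^ (n - (j + 1) + 1)) * hchoose
  · simp [binPMF, Nat.choose_eq_zero_of_lt (Nat.lt_succ_of_le hj), Nat.sub_eq_zero_of_le hj]

lemma binPMF_le_binPMF_succ (ha₀ : 0 < a) (ha₁ : a ≤ 1) (hj : j < n)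
    (h : (j + 1) * (1 - a) ≤ (n - j : ℕ) * a) : binPMF n j a ≤ binPMF n (j + 1) a := by
  have hpos : 0 < ((n - j : ℕ) : ℝ) * a := by
    have : (0 : ℝ) < (n - j : ℕ) := by exact_mod_cast Nat.sub_pos_of_lt hj
    positivity
  refine le_of_mul_le_mul_right ?_ hpos
  rw [← binPMF_succ_mul]
  exact mul_le_mul_of_nonneg_left h (binPMF_nonneg ha₀.le ha₁)

lemma binPMF_succ_le_binPMF (ha₀ : 0 ≤ a) (ha₁ : a < 1)
    (h : (n - j : ℕ) * a ≤ (j + 1) * (1 - a)) : binPMF n (j + 1) a ≤ binPMF n j a := by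
  have hpos : 0 < ((j : ℝ) + 1) * (1 - a) := by
    have : 0 < 1 - a := by linarith
    positivity
  refine le_of_mul_le_mul_right ?_ hpos
  rw [binPMF_succ_mul]
  exact mul_le_mul_of_nonneg_left h (binPMF_nonneg ha₀ ha₁.le)

lemma binPMF_le_binPMF_mode (hk : k ≤ n) (hj : j ≤ n) :
    binPMF n j (k / n) ≤ binPMF n k (k / n) := by
  rcases Nat.eq_zero_or_pos n with rfl | hn
  · obtain ⟨rfl, rfl⟩ : j = 0 ∧ k = 0 := by omega
    rfl
  replace hn : (0 : ℝ) < n := by exact_mod_cast hn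
  have ha₀ : (0 : ℝ) ≤ k / n := by positivity
  have ha₁ : (k : ℝ) / n ≤ 1 := div_le_one_of_le₀ (by exact_mod_cast hk) hn.le
  have hna : (n : ℝ) * (k / n) = k := mul_div_cancel₀ _ hn.ne'
  rcases le_total j k with hjk | hkj
  · have hmono : MonotoneOn (fun i => binPMF n i (k / n)) (Set.Iic k) := by
      refine monotoneOn_of_le_succ Set.ordConnected_Iic fun i _ _ hi => ?_
      rw [Order.succ_eq_add_one, Set.mem_Iic] at hi
      have hi' : (i : ℝ) + 1 ≤ k := by exact_mod_cast hi
      have hin : i < n := by omega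
      have hk₀ : (0 : ℝ) < k := by exact_mod_cast (show 0 < k by omega)
      refine binPMF_le_binPMF_succ (div_pos hk₀ hn) ha₁ hin ?_
      rw [Nat.cast_sub hin.le]
      linarith
    exact hmono hjk (Set.mem_Iic.2 le_rfl) hjk
  · have hanti : AntitoneOn (fun i => binPMF n i (k / n)) (Set.Icc k n) := by
      refine antitoneOn_of_succ_le Set.ordConnected_Icc fun i _ hi hi' => ?_
      rw [Order.succ_eq_add_one, Set.mem_Icc] at hi'
      have hki : (k : ℝ) ≤ i := by exact_mod_cast hi.1
      have hin : i < n := by omega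
      refine binPMF_succ_le_binPMF ha₀ ?_ ?_
      · rw [div_lt_one hn]; exact_mod_cast hi.1.trans_lt hin
      · rw [Nat.cast_sub hin.le]
        linarith
    exact hanti ⟨le_rfl, hk⟩ ⟨hkj, hj⟩ hkj

lemma one_le_succ_mul_binPMF_mode (hk : k ≤ n) : 1 ≤ ((n : ℝ) + 1) * binPMF n k (k / n) :=
  calc (1 : ℝ) = ∑ j ∈ Finset.range (n + 1), binPMF n j (k / n) := (sum_binPMF n _).symm
    _ ≤ ∑ _j ∈ Finset.range (n + 1), binPMF n k (k / n) :=
        Finset.sum_le_sum fun j hj =>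
          binPMF_le_binPMF_mode hk (Nat.lt_succ_iff.mp (Finset.mem_range.mp hj))
    _ = ((n : ℝ) + 1) * binPMF n k (k / n) := by simp

lemma log_binPMF (h : binPMF n k a ≠ 0) :
    log (binPMF n k a) = log (n.choose k) + k * log a + (n - k : ℕ) * log (1 - a) := by
  unfold binPMF at h ⊢
  obtain ⟨⟨hc, hp⟩, hq⟩ := mul_ne_zero_iff.mp h |>.imp_left mul_ne_zero_iff.mp
  rw [log_mul (mul_ne_zero hc hp) hq, log_mul hc hp, log_pow, log_pow]

lemma nat_mul_binEntropy_div (hk : k ≤ n) :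
    n * binEntropy (k / n) = -(k * log (k / n) + (n - k : ℕ) * log (1 - k / n)) := by
  rcases Nat.eq_zero_or_pos n with rfl | hn
  · obtain rfl : k = 0 := by omega
    simp
  have hn' : (n : ℝ) ≠ 0 := by positivity
  rw [binEntropy, log_inv, log_inv, Nat.cast_sub hk]
  field_simp
  ring

lemma nat_mul_binEntropy_sub_log_le_log_choose (hk : k ≤ n) :
    n * binEntropy (k / n) - log (n + 1) ≤ log (n.choose k) := by
  have hmode := one_le_succ_mul_binPMF_mode hk
  have hpos : 0 < binPMF n k (k / n) :=
    pos_of_mul_pos_right (one_pos.trans_le hmode) (by positivity)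
  have := log_nonneg hmode
  rw [log_mul (by positivity) hpos.ne', log_binPMF hpos.ne'] at this
  rw [nat_mul_binEntropy_div hk]
  linarith

end Binomial

lemma ConcaveOn.map_add_le {s : Set ℝ} {f : ℝ → ℝ} (hf : ConcaveOn ℝ s f)
    (h₀ : (0 : ℝ) ∈ s) (hf₀ : 0 ≤ f 0) {x y : ℝ} (hx : 0 ≤ x) (hy : 0 ≤ y)
    (hxy : x + y ∈ s) :
    f (x + y) ≤ f x + f y := by
  rcases (add_nonneg hx hy).eq_or_lt with h | h
  · obtain ⟨rfl, rfl⟩ : x = 0 ∧ y = 0 := ⟨by linarith, by linarith⟩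
    simpa using hf₀
  -- `x` and `y` are convex combinations of `x + y` and `0`.
  have key : ∀ z, 0 ≤ z → z ≤ x + y → z / (x + y) * f (x + y) ≤ f z := by
    intro z hz₀ hz
    have hw : 0 ≤ 1 - z / (x + y) := by rw [sub_nonneg, div_le_one h]; exact hz
    have := hf.2 hxy h₀ (div_nonneg hz₀ h.le) hw (by ring)
    simp only [smul_eq_mul, mul_zero, add_zero, div_mul_cancel₀ _ h.ne'] at this
    linarith [mul_nonneg hw hf₀]
  have hx' := key x hx (by linarith)
  have hy' := key y hy (by linarith)
  have hsum : x / (x + y) + y / (x + y) = 1 := by field_simp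
  calc f (x + y) = (x / (x + y) + y / (x + y)) * f (x + y) := by rw [hsum, one_mul]
    _ ≤ f x + f y := by rw [add_mul]; exact add_le_add hx' hy'

lemma binEntropy_add_le {x y : ℝ} (hx : 0 ≤ x) (hy : 0 ≤ y) (hxy : x + y ≤ 1) :
    binEntropy (x + y) ≤ binEntropy x + binEntropy y :=
  strictConcave_binEntropy.concaveOn.map_add_le ⟨le_rfl, zero_le_one⟩ binEntropy_zero.ge hx hy
    ⟨add_nonneg hx hy, hxy⟩

lemma nat_mul_binEntropy_le (n : ℕ) {d : ℝ} (hd : 0 ≤ d) (hnd : n * d ≤ 1) :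
    n * binEntropy d ≤ log n + 1 := by
  rcases Nat.eq_zero_or_pos n with rfl | hn
  · simp
  have hd₁ : d ≤ 1 := le_trans (le_mul_of_one_le_left hd (by exact_mod_cast hn)) hnd
  have hscale : n * negMulLog d = negMulLog (n * d) + n * d * log n := by
    rw [negMulLog_mul]; simp only [negMulLog]; ring
  have h₁ := negMulLog_le_one_sub_self (mul_nonneg (Nat.cast_nonneg n) hd)
  have h₂ : n * negMulLog (1 - d) ≤ n * d := by
    gcongr
    simpa using negMulLog_le_one_sub_self (sub_nonneg.mpr hd₁)
  have hlog : n * d * log n ≤ log n := mul_le_of_le_one_left (log_natCast_nonneg n) hnd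
  rw [binEntropy_eq_negMulLog_add_negMulLog_one_sub, mul_add]
  linarith

lemma nat_mul_binEntropy_sub_le {n : ℕ} {a b : ℝ} (ha : 0 ≤ a) (hab : a ≤ b) (hb : b ≤ 1)
    (hn : n * (b - a) ≤ 1) : n * (binEntropy b - binEntropy a) ≤ 3 * log (n + 1) := by
  rcases Nat.eq_zero_or_pos n with rfl | hn₀
  · simp
  have hsub : binEntropy b ≤ binEntropy a + binEntropy (b - a) := by
    simpa using binEntropy_add_le ha (sub_nonneg.mpr hab) (by linarith)
  have hlog₁ : log n ≤ log (n + 1) := log_le_log (by exact_mod_cast hn₀) (by linarith)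
  have hn₁ : (1 : ℝ) ≤ n := by exact_mod_cast hn₀
  have hlog₂ : log 2 ≤ log (n + 1) := log_le_log two_pos (by linarith)
  calc n * (binEntropy b - binEntropy a) ≤ n * binEntropy (b - a) := by gcongr; linarith
    _ ≤ log n + 1 := nat_mul_binEntropy_le n (sub_nonneg.mpr hab) hn
    _ ≤ 3 * log (n + 1) := by linarith [log_two_gt_d9]

lemma klB_mul_log_two {b p : ℝ} (hp₀ : p ≠ 0) (hp₁ : p ≠ 1) :
    klB b p * log 2 = -binEntropy b - b * log p - (1 - b) * log (1 - p) := by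
  have hq : 1 - p ≠ 0 := sub_ne_zero.mpr hp₁.symm
  have mul_log_div : ∀ x y : ℝ, y ≠ 0 → x * log (x / y) = x * log x - x * log y := by
    intro x y hy
    rcases eq_or_ne x 0 with rfl | hx
    · simp
    · rw [log_div hx hy]; ring
  rw [klB, binEntropy, log_inv, log_inv, add_mul, mul_assoc, mul_assoc, logb, logb,
    div_mul_cancel₀ _ (log_pos one_lt_two).ne', div_mul_cancel₀ _ (log_pos one_lt_two).ne',
    mul_log_div _ _ hp₀, mul_log_div _ _ hq]
  ring

lemma mul_le_max_zero {x y : ℝ} (hx₀ : 0 ≤ x) (hx₁ : x ≤ 1) : x * y ≤ max 0 y := by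
  rcases le_total 0 y with hy | hy
  · exact (mul_le_of_le_one_left hy hx₁).trans (le_max_right _ _)
  · exact (mul_nonpos_of_nonneg_of_nonpos hx₀ hy).trans (le_max_left _ _)

lemma neg_le_log_binPMF_floor (n : ℕ) {p b : ℝ} (hp₀ : 0 < p) (hp₁ : p < 1)
    (hb₀ : 0 ≤ b) (hb₁ : b ≤ 1) :
    -(n * (klB b p * log 2) + 4 * log (n + 1) + max 0 (log (p / (1 - p))))
      ≤ log (binPMF n ⌊b * n⌋₊ p) := by
  set k := ⌊b * n⌋₊
  have hk : (k : ℝ) ≤ b * n := Nat.floor_le (by positivity)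
  have hk' : b * n < k + 1 := Nat.lt_floor_add_one _
  have hkn : k ≤ n := Nat.floor_le_of_le (mul_le_of_le_one_left (Nat.cast_nonneg n) hb₁)
  have hnk : (n : ℝ) * (k / n) = k :=
    mul_div_cancel_of_imp' fun h => by simp_all [show n = 0 by exact_mod_cast h]
  have hH := nat_mul_binEntropy_sub_le (n := n) (b := b) (a := k / n) (by positivity)
    (div_le_of_le_mul₀ (Nat.cast_nonneg n) hb₀ hk) hb₁ (by rw [mul_sub, hnk]; linarith)
  have hchoose := nat_mul_binEntropy_sub_log_le_log_choose hkn
  have hM := mul_le_max_zero (y := log (p / (1 - p))) (sub_nonneg.mpr hk) (by linarith)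
  rw [log_binPMF (binPMF_pos hp₀ hp₁ hkn).ne', klB_mul_log_two hp₀.ne' hp₁.ne,
    Nat.cast_sub hkn]
  rw [log_div hp₀.ne' (sub_pos.mpr hp₁).ne'] at hM ⊢
  linarith

lemma two_rpow_le_binPMF_floor (n : ℕ) {p b : ℝ} (hp₀ : 0 < p) (hp₁ : p < 1)
    (hb₀ : 0 ≤ b) (hb₁ : b ≤ 1) :
    (2 : ℝ) ^ (-(n : ℝ) * klB b p - 4 * logb 2 ((n : ℝ) + 1) - max 0 (logb 2 (p / (1 - p))))
      ≤ binPMF n ⌊b * n⌋₊ p := by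
  have hkn : ⌊b * n⌋₊ ≤ n :=
    Nat.floor_le_of_le (mul_le_of_le_one_left (Nat.cast_nonneg n) hb₁)
  have hlog₂ := log_pos one_lt_two
  rw [← le_logb_iff_rpow_le one_lt_two (binPMF_pos hp₀ hp₁ hkn)]
  simp only [logb]
  rw [le_div_iff₀ hlog₂]
  refine le_of_eq_of_le ?_ (neg_le_log_binPMF_floor n hp₀ hp₁ hb₀ hb₁)
  rw [sub_mul, sub_mul, max_mul_of_nonneg _ _ hlog₂.le, zero_mul,
    div_mul_cancel₀ _ hlog₂.ne']
  field_simp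
  ring

lemma measure_forall_ne_le {Ω ι β : Type*} [MeasurableSpace Ω] {μ : Measure Ω}
    [IsProbabilityMeasure μ] [Fintype ι] [MeasurableSpace β] [MeasurableSingletonClass β]
    {X : ι → Ω → β} (hX : iIndepFun X μ) (hXm : ∀ i, Measurable (X i)) (x : β) {s : ℝ}
    (hs₀ : 0 ≤ s) (hs : ∀ i, ENNReal.ofReal s ≤ μ {ω | X i ω = x}) :
    μ {ω | ∀ i, X i ω ≠ x} ≤ ENNReal.ofReal (exp (-(Fintype.card ι * s))) := by
  have hset :
      {ω | ∀ i, X i ω ≠ x} = ⋂ i ∈ (Finset.univ : Finset ι), X i ⁻¹' {x}ᶜ := by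
    ext
    simp
  have hfactor (i : ι) : μ (X i ⁻¹' {x}ᶜ) ≤ ENNReal.ofReal (exp (-s)) :=
    calc μ (X i ⁻¹' {x}ᶜ) = 1 - μ {ω | X i ω = x} :=
          prob_compl_eq_one_sub (hXm i (measurableSet_singleton x))
      _ ≤ 1 - ENNReal.ofReal s := tsub_le_tsub_left (hs i) 1
      _ = ENNReal.ofReal (1 - s) := by rw [ENNReal.ofReal_sub 1 hs₀, ENNReal.ofReal_one]
      _ ≤ ENNReal.ofReal (exp (-s)) := ENNReal.ofReal_le_ofReal (one_sub_le_exp_neg s)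
  calc μ {ω | ∀ i, X i ω ≠ x} = ∏ i, μ (X i ⁻¹' {x}ᶜ) := by
        rw [hset]
        exact hX.measure_inter_preimage_eq_mul _ fun _ _ => (measurableSet_singleton x).compl
    _ ≤ ∏ _i : ι, ENNReal.ofReal (exp (-s)) := Finset.prod_le_prod' fun i _ => hfactor i
    _ = ENNReal.ofReal (exp (-(Fintype.card ι * s))) := by
        rw [Finset.prod_const, Finset.card_univ, ← ENNReal.ofReal_pow (exp_pos _).le,
          ← exp_nat_mul, mul_neg]

/-- Anti-concentration for the minimum of i.i.d. binomials. -/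
theorem min_binomial_lower_tail (r n : ℕ) (p b : ℝ)
    (hp : 0 < p) (hp1 : p < 1) (hb0 : 0 ≤ b) (hbp : b ≤ p)
    (Ω : Type*) [MeasurableSpace Ω] (μ : Measure Ω) [IsProbabilityMeasure μ]
    (X : Fin r → Ω → ℕ) (hXm : ∀ i, Measurable (X i))
    (hindep : iIndepFun X μ)
    (hmarg : ∀ i k, μ {ω | X i ω = k} = ENNReal.ofReal (binPMF n k p)) :
    (μ {ω | ∀ i, b * n < (X i ω : ℝ)}).toReal
      ≤ Real.exp (-(r : ℝ) * (2 : ℝ) ^ (-(n : ℝ) * klB b p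
          - 4 * Real.logb 2 ((n : ℝ) + 1) - max 0 (Real.logb 2 (p / (1 - p))))) := by
  set k := ⌊b * n⌋₊
  have hsub : {ω | ∀ i, b * n < (X i ω : ℝ)} ⊆ {ω | ∀ i, X i ω ≠ k} :=
    fun ω h i hk => (h i).not_ge (hk ▸ Nat.floor_le (by positivity))
  have htail := measure_forall_ne_le hindep hXm k (binPMF_nonneg hp.le hp1.le)
    fun i => (hmarg i k).ge
  rw [Fintype.card_fin] at htail
  calc (μ {ω | ∀ i, b * n < (X i ω : ℝ)}).toReal
        ≤ (μ {ω | ∀ i, X i ω ≠ k}).toReal :=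
        ENNReal.toReal_mono (measure_ne_top _ _) (measure_mono hsub)
    _ ≤ exp (-(r * binPMF n k p)) := ENNReal.toReal_le_of_le_ofReal (exp_pos _).le htail
    _ ≤ _ := by
        rw [neg_mul]
        gcongr
        exact two_rpow_le_binPMF_floor n hp hp1 hb0 (hbp.trans hp1.le)
end

section
/- Let X₁,…,X_r be i.i.d. Bin(n,p), 0 < p < 1, Z = min_i X_i, δ ∈ (0,1), and Δ = log₂(2/δ) + 4 log₂(n+1) + max(0, log₂(p/(1-p))). If KL(0‖p) < (log₂ r - Δ)/n, then P(Z = 0) ≥ 1 - δ/2. -/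
/-!
Each sample is `0` with probability `q = (1 - p)ⁿ`, so by independence
`P(Z ≠ 0) = (1 - q)^r ≤ exp (-r q) < 1 / (r q)`. Since `KL(0‖p) = -log₂ (1 - p)`, the hypothesis
on `KL(0‖p)` says `log₂ (r q) > Δ ≥ log₂ (2 / δ)`, i.e. `1 / (r q) < δ / 2`.
-/

open MeasureTheory ProbabilityTheory

theorem klB_zero_left (p : ℝ) : klB 0 p = -Real.logb 2 (1 - p) := by
  simp [klB, Real.logb_inv]

theorem binPMF_zero (n : ℕ) (p : ℝ) : binPMF n 0 p = (1 - p) ^ n := by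
  simp [binPMF]

theorem lt_mul_one_sub_pow_of_klB_zero_lt {r n : ℕ} {p c Δ : ℝ} (hr : 0 < r) (hp : 0 ≤ p)
    (hp1 : p < 1) (hc : 0 < c) (hcΔ : Real.logb 2 c ≤ Δ)
    (hkl : klB 0 p < (Real.logb 2 r - Δ) / n) :
    c < r * (1 - p) ^ n := by
  rw [klB_zero_left] at hkl
  have hlog : Real.logb 2 (1 - p) ≤ 0 := Real.logb_nonpos one_lt_two (by linarith) (by linarith)
  have hn : (0 : ℝ) < n := by
    rcases Nat.eq_zero_or_pos n with rfl | hn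
    · simp at hkl; linarith
    · exact_mod_cast hn
  have hΔ : Δ < Real.logb 2 (r * (1 - p) ^ n) := by
    rw [Real.logb_mul (by positivity) (by positivity), Real.logb_pow]
    have := (lt_div_iff₀ hn).mp hkl
    linarith
  exact (Real.logb_lt_logb_iff one_lt_two hc (by positivity)).mp (hcΔ.trans_lt hΔ)

theorem Real.exp_neg_lt_inv {x : ℝ} (hx : 0 < x) : Real.exp (-x) < x⁻¹ := by
  rw [Real.exp_neg]
  exact inv_strictAnti₀ hx (by linarith [Real.add_one_le_exp x])

theorem one_sub_pow_lt_inv_mul {r : ℕ} {q : ℝ} (hq : q ≤ 1) (hrq : 0 < r * q) :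
    (1 - q) ^ r < (r * q)⁻¹ := by
  have hr : (r : ℝ) ≠ 0 := by rintro h; simp [h] at hrq
  calc (1 - q) ^ r = (1 - r * q / r) ^ r := by rw [mul_div_cancel_left₀ q hr]
    _ ≤ Real.exp (-(r * q)) := Real.one_sub_div_pow_le_exp_neg (by nlinarith)
    _ < (r * q)⁻¹ := Real.exp_neg_lt_inv hrq

theorem measureReal_iUnion_preimage_eq_one_sub_prod {Ω ι α : Type*} [MeasurableSpace Ω]
    [MeasurableSpace α] [Fintype ι] {μ : Measure Ω} [IsProbabilityMeasure μ] {X : ι → Ω → α}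
    (hXm : ∀ i, Measurable (X i)) (hX : iIndepFun X μ) {s : Set α} (hs : MeasurableSet s) :
    μ.real (⋃ i, X i ⁻¹' s) = 1 - ∏ i, (1 - μ.real (X i ⁻¹' s)) := by
  have hcompl := probReal_compl_eq_one_sub (μ := μ) (MeasurableSet.iUnion fun i => hXm i hs)
  rw [Set.compl_iUnion, measureReal_def,
    hX.meas_iInter fun i => ⟨sᶜ, hs.compl, Set.preimage_compl⟩, ENNReal.toReal_prod] at hcompl
  simp_rw [← measureReal_def, probReal_compl_eq_one_sub (hXm _ hs)] at hcompl
  linarith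

theorem min_binomial_degenerate_general (r n : ℕ) (p δ Δ : ℝ) (hr : 0 < r)
    (hp : 0 < p) (hp1 : p < 1) (hδ0 : 0 < δ)
    (hΔ : Δ = Real.logb 2 (2 / δ) + 4 * Real.logb 2 ((n : ℝ) + 1)
            + max 0 (Real.logb 2 (p / (1 - p))))
    (hkl0 : klB 0 p < (Real.logb 2 r - Δ) / n)
    (Ω : Type*) [MeasurableSpace Ω] (μ : Measure Ω) [IsProbabilityMeasure μ]
    (X : Fin r → Ω → ℕ) (hXm : ∀ i, Measurable (X i))
    (hindep : iIndepFun X μ)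
    (hmarg : ∀ i k, μ {ω | X i ω = k} = ENNReal.ofReal (binPMF n k p))
    (Z : Ω → ℕ)
    (hZ : ∀ ω, Z ω = Finset.univ.inf'
      (Finset.univ_nonempty_iff.mpr (Fin.pos_iff_nonempty.mp hr)) (fun i => X i ω)) :
    1 - δ / 2 ≤ (μ {ω | Z ω = 0}).toReal := by
  set q := (1 - p) ^ n
  have hq1 : q ≤ 1 := pow_le_one₀ (by linarith) (by linarith)
  have hΔc : Real.logb 2 (2 / δ) ≤ Δ := by
    have : 0 ≤ Real.logb 2 ((n : ℝ) + 1) := Real.logb_nonneg one_lt_two (by simp)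
    rw [hΔ]; linarith [le_max_left 0 (Real.logb 2 (p / (1 - p)))]
  have hrq : 2 / δ < r * q :=
    lt_mul_one_sub_pow_of_klB_zero_lt hr hp.le hp1 (by positivity) hΔc hkl0
  have hZ0 : {ω | Z ω = 0} = ⋃ i, X i ⁻¹' {0} := by
    ext ω
    simp only [Set.mem_ofPred_eq, Set.mem_iUnion, Set.mem_preimage, Set.mem_singleton_iff,
      ← nonpos_iff_eq_zero, hZ, Finset.inf'_le_iff, Finset.mem_univ, true_and]
  have hX0 : ∀ i, μ.real (X i ⁻¹' {0}) = q := fun i => by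
    rw [measureReal_def, show X i ⁻¹' {0} = {ω | X i ω = 0} from rfl, hmarg, binPMF_zero,
      ENNReal.toReal_ofReal (by positivity)]
  have hrq0 : 0 < r * q := (by positivity : (0 : ℝ) < 2 / δ).trans hrq
  have htail : (1 - q) ^ r < δ / 2 := by
    calc (1 - q) ^ r < (r * q)⁻¹ := one_sub_pow_lt_inv_mul hq1 hrq0
      _ < (2 / δ)⁻¹ := inv_strictAnti₀ (by positivity) hrq
      _ = δ / 2 := inv_div 2 δ
  rw [← measureReal_def, hZ0,
    measureReal_iUnion_preimage_eq_one_sub_prod hXm hindep (measurableSet_singleton 0)]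
  simp only [hX0, Finset.prod_const, Finset.card_univ, Fintype.card_fin]
  linarith

/-- Degenerate regime: the minimum of i.i.d. binomials is 0 with high probability. -/
theorem min_binomial_degenerate (r n : ℕ) (p δ Δ : ℝ) (hr : 0 < r)
    (hp : 0 < p) (hp1 : p < 1) (hδ0 : 0 < δ) (hδ1 : δ < 1)
    (hΔ : Δ = Real.logb 2 (2 / δ) + 4 * Real.logb 2 ((n : ℝ) + 1)
            + max 0 (Real.logb 2 (p / (1 - p))))
    (hkl0 : klB 0 p < (Real.logb 2 r - Δ) / n)
    (Ω : Type*) [MeasurableSpace Ω] (μ : Measure Ω) [IsProbabilityMeasure μ]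
    (X : Fin r → Ω → ℕ) (hXm : ∀ i, Measurable (X i))
    (hindep : iIndepFun X μ)
    (hmarg : ∀ i k, μ {ω | X i ω = k} = ENNReal.ofReal (binPMF n k p))
    (Z : Ω → ℕ)
    (hZ : ∀ ω, Z ω = Finset.univ.inf'
      (Finset.univ_nonempty_iff.mpr (Fin.pos_iff_nonempty.mp hr)) (fun i => X i ω)) :
    1 - δ / 2 ≤ (μ {ω | Z ω = 0}).toReal :=
  min_binomial_degenerate_general r n p δ Δ hr hp hp1 hδ0 hΔ hkl0 Ω μ X hXm hindep hmarg Z hZ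
end

section
/- Let X₁,…,X_r be i.i.d. Bin(n,p), 0 < p < 1, Z = min_i X_i, δ ∈ (0,1). Suppose there exists a ∈ [0,p) with KL(a‖p) = (log₂ r + log₂(2/δ) + 4 log₂(n+1) + max(0, log₂(p/(1-p))))/n. Then P(Z < a·n) ≤ δ/2. -/
open MeasureTheory ProbabilityTheory

lemma binPMF_le_one {n k : ℕ} {a : ℝ} (h0 : 0 ≤ a) (h1 : a ≤ 1) : binPMF n k a ≤ 1 := by
  rcases le_or_gt k n with hk | hk
  · have h1' : 0 ≤ 1 - a := sub_nonneg.2 h1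
    calc binPMF n k a ≤ ∑ j ∈ Finset.range (n + 1), binPMF n j a :=
          Finset.single_le_sum (f := fun j => binPMF n j a) (fun j _ => by unfold binPMF; positivity)
            (Finset.mem_range.2 (Nat.lt_succ_of_le hk))
      _ = (a + (1 - a)) ^ n := by
          rw [add_pow]; exact Finset.sum_congr rfl fun j _ => by unfold binPMF; ring
      _ = 1 := by simp
  · simp [binPMF, Nat.choose_eq_zero_of_lt hk]

lemma binPMF_eq_mul_likelihood_ratio {n k : ℕ} {a p : ℝ} (ha0 : 0 < a) (ha1 : a < 1) :
    binPMF n k p = binPMF n k a * ((p / a) ^ k * ((1 - p) / (1 - a)) ^ (n - k)) := by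
  have : 1 - a ≠ 0 := by linarith
  unfold binPMF
  rw [div_pow, div_pow]
  field_simp

lemma binPMF_le_likelihood_ratio {n k : ℕ} {a p : ℝ} (ha0 : 0 < a) (hap : a ≤ p) (hp1 : p < 1) :
    binPMF n k p ≤ (p / a) ^ k * ((1 - p) / (1 - a)) ^ (n - k) := by
  have ha1 : a < 1 := hap.trans_lt hp1
  have : 0 ≤ p := ha0.le.trans hap
  have : 0 ≤ 1 - p := by linarith
  have : 0 ≤ 1 - a := by linarith
  rw [binPMF_eq_mul_likelihood_ratio ha0 ha1]
  exact mul_le_of_le_one_left (by positivity) (binPMF_le_one ha0.le ha1.le)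

lemma two_rpow_neg_mul_klB {a p : ℝ} (ha0 : 0 < a) (ha1 : a < 1) (hp0 : 0 < p) (hp1 : p < 1)
    (x : ℝ) : (2 : ℝ) ^ (-x * klB a p) = (p / a) ^ (a * x) * ((1 - p) / (1 - a)) ^ ((1 - a) * x) := by
  have ha1' : 0 < 1 - a := by linarith
  have hp1' : 0 < 1 - p := by linarith
  have hlog : ∀ u v : ℝ, 0 < u → 0 < v → ∀ t : ℝ, (u / v) ^ t = 2 ^ (-t * Real.logb 2 (v / u)) := by
    intro u v hu hv t
    rw [mul_comm, Real.rpow_mul zero_le_two, Real.rpow_logb zero_lt_two one_lt_two.ne' (div_pos hv hu),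
      Real.rpow_neg (div_pos hv hu).le, ← Real.inv_rpow (div_pos hv hu).le, inv_div]
  rw [hlog p a hp0 ha0, hlog _ _ hp1' ha1', ← Real.rpow_add zero_lt_two, klB]
  ring_nf

lemma binPMF_le_two_rpow_neg_mul_klB {n k : ℕ} {a p : ℝ} (ha0 : 0 < a) (hap : a ≤ p) (hp1 : p < 1)
    (hk : (k : ℝ) ≤ a * n) : binPMF n k p ≤ (2 : ℝ) ^ (-(n : ℝ) * klB a p) := by
  have ha1 : a < 1 := hap.trans_lt hp1
  have hp0 : 0 < p := ha0.trans_le hap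
  have hkn : k ≤ n := by
    have : (k : ℝ) ≤ n := hk.trans (mul_le_of_le_one_left n.cast_nonneg ha1.le)
    exact_mod_cast this
  have hratio0 : 0 < (1 - p) / (1 - a) := div_pos (by linarith) (by linarith)
  calc binPMF n k p ≤ (p / a) ^ k * ((1 - p) / (1 - a)) ^ (n - k) :=
        binPMF_le_likelihood_ratio ha0 hap hp1
    _ = (p / a) ^ (k : ℝ) * ((1 - p) / (1 - a)) ^ ((n : ℝ) - k) := by
        rw [Real.rpow_natCast, ← Nat.cast_sub hkn, Real.rpow_natCast]
    _ ≤ (p / a) ^ (a * n) * ((1 - p) / (1 - a)) ^ ((1 - a) * n) := by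
        have hratio1 : (1 - p) / (1 - a) ≤ 1 := (div_le_one (by linarith)).2 (by linarith)
        exact mul_le_mul (Real.rpow_le_rpow_of_exponent_le ((one_le_div ha0).2 hap) hk)
          (Real.rpow_le_rpow_of_exponent_ge hratio0 hratio1 (by linarith)) (by positivity)
          (by positivity)
    _ = (2 : ℝ) ^ (-(n : ℝ) * klB a p) := by
        rw [two_rpow_neg_mul_klB ha0 ha1 hp0 hp1, mul_comm a, mul_comm (1 - a)]

lemma measure_lower_tail_le_of_binPMF {Ω : Type*} [MeasurableSpace Ω] {μ : Measure Ω} {X : Ω → ℕ}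
    {n : ℕ} {a p : ℝ} (hX : ∀ k, μ {ω | X ω = k} = ENNReal.ofReal (binPMF n k p))
    (hap : a ≤ p) (hp1 : p < 1) :
    μ {ω | (X ω : ℝ) < a * n} ≤ ENNReal.ofReal ((n + 1) * 2 ^ (-(n : ℝ) * klB a p)) := by
  set s := (Finset.range (n + 1)).filter fun k : ℕ => (k : ℝ) < a * n
  have hsub : {ω | (X ω : ℝ) < a * n} ⊆ ⋃ k ∈ s, {ω | X ω = k} := by
    intro ω (hω : (X ω : ℝ) < a * n)
    have hXn : (X ω : ℝ) < n + 1 := by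
      nlinarith [mul_le_of_le_one_left n.cast_nonneg (hap.trans hp1.le)]
    simp only [Set.mem_iUnion, Set.mem_ofPred_eq, exists_prop, exists_eq_right', s,
      Finset.mem_filter, Finset.mem_range]
    exact ⟨by exact_mod_cast hXn, hω⟩
  calc μ {ω | (X ω : ℝ) < a * n} ≤ ∑ k ∈ s, μ {ω | X ω = k} :=
        (measure_mono hsub).trans (measure_biUnion_finset_le _ _)
    _ ≤ ∑ _k ∈ s, ENNReal.ofReal (2 ^ (-(n : ℝ) * klB a p)) := by
        refine Finset.sum_le_sum fun k hk => ?_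
        have hk : (k : ℝ) < a * n := (Finset.mem_filter.1 hk).2
        have ha0 : 0 < a := pos_of_mul_pos_left (k.cast_nonneg.trans_lt hk) n.cast_nonneg
        rw [hX]
        exact ENNReal.ofReal_le_ofReal (binPMF_le_two_rpow_neg_mul_klB ha0 hap hp1 hk.le)
    _ ≤ (n + 1) * ENNReal.ofReal (2 ^ (-(n : ℝ) * klB a p)) := by
        rw [Finset.sum_const, nsmul_eq_mul]
        gcongr
        exact_mod_cast (Finset.card_filter_le _ _).trans (Finset.card_range _).le
    _ = ENNReal.ofReal ((n + 1) * 2 ^ (-(n : ℝ) * klB a p)) := by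
        rw [ENNReal.ofReal_mul (by positivity)]
        norm_cast

lemma mul_two_rpow_neg_le {r n : ℕ} {δ K M : ℝ} (hn : 0 < n) (hδ : 0 < δ) (hM : 0 ≤ M)
    (hK : n * K = Real.logb 2 r + Real.logb 2 (2 / δ) + 4 * Real.logb 2 ((n : ℝ) + 1) + M) :
    r * ((n + 1) * 2 ^ (-(n : ℝ) * K)) ≤ δ / 2 := by
  rcases Nat.eq_zero_or_pos r with rfl | hr
  · simp only [Nat.cast_zero, zero_mul]; positivity
  have hr' : (0 : ℝ) < r := by exact_mod_cast hr
  have hn1 : (0 : ℝ) < n + 1 := by positivity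
  calc (r : ℝ) * ((n + 1) * 2 ^ (-(n : ℝ) * K))
      = 2 ^ (Real.logb 2 (r * (n + 1)) - n * K) := by
        rw [neg_mul, Real.rpow_neg zero_le_two, Real.rpow_sub zero_lt_two,
          Real.rpow_logb zero_lt_two one_lt_two.ne' (by positivity)]
        ring
    _ ≤ 2 ^ Real.logb 2 (δ / 2) := by
        gcongr
        · exact one_le_two
        rw [Real.logb_mul hr'.ne' hn1.ne', hK, ← inv_div, Real.logb_inv]
        have : 0 ≤ Real.logb 2 ((n : ℝ) + 1) := Real.logb_nonneg one_lt_two (by linarith)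
        linarith
    _ = δ / 2 := Real.rpow_logb zero_lt_two one_lt_two.ne' (by positivity)

theorem min_binomial_upper_event_general (r n : ℕ) (p δ a : ℝ)
    (hp1 : p < 1) (hδ0 : 0 < δ)
    (ha : a ∈ Set.Ico (0 : ℝ) p)
    (hkla : klB a p = (Real.logb 2 r + Real.logb 2 (2 / δ)
      + 4 * Real.logb 2 ((n : ℝ) + 1) + max 0 (Real.logb 2 (p / (1 - p)))) / n)
    (Ω : Type*) [MeasurableSpace Ω] (μ : Measure Ω)
    (X : Fin r → Ω → ℕ)
    (hmarg : ∀ i k, μ {ω | X i ω = k} = ENNReal.ofReal (binPMF n k p)) :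
    (μ {ω | ∃ i, (X i ω : ℝ) < a * n}).toReal ≤ δ / 2 := by
  rcases Nat.eq_zero_or_pos n with rfl | hn
  · have hempty : {ω | ∃ i, (X i ω : ℝ) < a * (0 : ℕ)} = ∅ := by
      refine Set.eq_empty_of_forall_notMem fun ω ⟨i, hi⟩ => ?_
      rw [Nat.cast_zero, mul_zero] at hi
      exact (X i ω).cast_nonneg.not_gt hi
    rw [hempty, measure_empty, ENNReal.toReal_zero]
    positivity
  have hbound : r * ((n + 1) * 2 ^ (-(n : ℝ) * klB a p)) ≤ δ / 2 :=
    mul_two_rpow_neg_le hn hδ0 (le_max_left _ _) (by rw [hkla]; field_simp)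
  refine ENNReal.toReal_le_of_le_ofReal (by positivity) ?_
  calc μ {ω | ∃ i, (X i ω : ℝ) < a * n} ≤ ∑ i, μ {ω | (X i ω : ℝ) < a * n} := by
        rw [Set.ofPred_exists]; exact measure_iUnion_fintype_le μ _
    _ ≤ ∑ _i : Fin r, ENNReal.ofReal ((n + 1) * 2 ^ (-(n : ℝ) * klB a p)) :=
        Finset.sum_le_sum fun i _ => measure_lower_tail_le_of_binPMF (hmarg i) ha.2.le hp1
    _ ≤ ENNReal.ofReal (δ / 2) := by
        rw [Finset.sum_const, Finset.card_univ, Fintype.card_fin, nsmul_eq_mul,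
          ← ENNReal.ofReal_natCast, ← ENNReal.ofReal_mul r.cast_nonneg]
        exact ENNReal.ofReal_le_ofReal hbound

theorem min_binomial_upper_event (r n : ℕ) (p δ a : ℝ)
    (hp : 0 < p) (hp1 : p < 1) (hδ0 : 0 < δ) (hδ1 : δ < 1)
    (ha : a ∈ Set.Ico (0 : ℝ) p)
    (hkla : klB a p = (Real.logb 2 r + Real.logb 2 (2 / δ)
      + 4 * Real.logb 2 ((n : ℝ) + 1) + max 0 (Real.logb 2 (p / (1 - p)))) / n)
    (Ω : Type*) [MeasurableSpace Ω] (μ : Measure Ω) [IsProbabilityMeasure μ]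
    (X : Fin r → Ω → ℕ) (hXm : ∀ i, Measurable (X i))
    (hindep : iIndepFun X μ)
    (hmarg : ∀ i k, μ {ω | X i ω = k} = ENNReal.ofReal (binPMF n k p)) :
    (μ {ω | ∃ i, (X i ω : ℝ) < a * n}).toReal ≤ δ / 2 :=
  min_binomial_upper_event_general r n p δ a hp1 hδ0 ha hkla Ω μ X hmarg
end
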